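/- Let G be a group with finite generating set X, let y ∈ G be expressible as a word y = y₁⋯y_n with each y_i ∈ X ∪ X⁻¹, and let Y := X ∪ {y}. Write d_X and d_Y for the word metrics of X and Y, and C_q^k(G; d) for the chain groups formed with respect to a metric d. If every z ∈ C_1^1(G; d_X) with ∂₁ z = 0 satisfies z = ∂₂ c for some c ∈ C_2^l(G; d_X), then every z ∈ C_1^1(G; d_Y) with ∂₁ z = 0 satisfies z = ∂₂ c' for some c' ∈ C_2^{l+2n}(G; d_Y). -/
import Mathlib

set_option linter.unusedSectionVars false

open Finsupp

variable {G : Type*} [Group G]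

/-- Word length with respect to a generating set `X`. -/
noncomputable def wordLength (X : Finset G) (g : G) : ℕ :=
  sInf {n : ℕ | ∃ w : List G, w.length = n ∧ (∀ x ∈ w, x ∈ X ∨ x⁻¹ ∈ X) ∧ w.prod = g}

/-- The left-invariant word metric `d(g,h) = l(g⁻¹h)`. -/
noncomputable def wordDist (X : Finset G) (g h : G) : ℕ :=
  wordLength X (g⁻¹ * h)

/-- `c` is a chain in `C_q^k(S)`: its support consists of `(q+1)`-tuples of elements of `S`
that are pairwise at distance at most `k`. -/
def VRChain (X : Finset G) (S : Set G) (q k : ℕ) (c : (Fin (q + 1) → G) →₀ ℤ) : Prop :=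
  ∀ σ ∈ c.support, (∀ i, σ i ∈ S) ∧ ∀ i j, wordDist X (σ i) (σ j) ≤ k

/-- The simplicial boundary map `∂_{q+1} : ℤ[G^{q+2}] → ℤ[G^{q+1}]`. -/
noncomputable def bnd (q : ℕ) :
    ((Fin (q + 2) → G) →₀ ℤ) →ₗ[ℤ] ((Fin (q + 1) → G) →₀ ℤ) :=
  Finsupp.lift _ ℤ _
    (fun σ => ∑ i : Fin (q + 2), ((-1 : ℤ) ^ (i : ℕ)) • Finsupp.single (σ ∘ i.succAbove) (1 : ℤ))

/-- The augmentation `ε : ℤ[G] → ℤ` sending every vertex to `1`. -/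
noncomputable def aug : ((Fin 1 → G) →₀ ℤ) →ₗ[ℤ] ℤ :=
  Finsupp.lift ℤ ℤ (Fin 1 → G) (fun _ => (1 : ℤ))

/-- Reduced `q`-cycles at scale `k` on `S` bound at scale `l` on `S`. -/
def BoundsAt (X : Finset G) (S : Set G) : ℕ → ℕ → ℕ → Prop
  | 0, k, l => ∀ z : (Fin 1 → G) →₀ ℤ, VRChain X S 0 k z → aug z = 0 →
      ∃ c : (Fin 2 → G) →₀ ℤ, VRChain X S 1 l c ∧ bnd 0 c = z
  | (q + 1), k, l => ∀ z : (Fin (q + 2) → G) →₀ ℤ, VRChain X S (q + 1) k z → bnd q z = 0 →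
      ∃ c : (Fin (q + 3) → G) →₀ ℤ, VRChain X S (q + 2) l c ∧ bnd (q + 1) c = z

/-- `S ⊆ G` is of type `FP_m`. -/
def TypeFP (X : Finset G) (S : Set G) (m : ℕ) : Prop :=
  ∀ q < m, ∀ k : ℕ, ∃ l ≥ k, BoundsAt X S q k l

/-- A character on `G` is a homomorphism to the additive reals. -/
def IsCharacter (χ : G → ℝ) : Prop :=
  ∀ g h : G, χ (g * h) = χ g + χ h

/-- Simultaneous left translation on chains, making `ℤ[G^{q+1}]` a `ℤG`-module. -/
noncomputable def lTranslate (g : G) (q : ℕ) :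
    ((Fin (q + 1) → G) →₀ ℤ) →ₗ[ℤ] ((Fin (q + 1) → G) →₀ ℤ) :=
  Finsupp.lmapDomain ℤ ℤ (fun σ i => g * σ i)

/-- A chain endomorphism of `ℤG`-complexes on `(C_q^k(G))_{q=0,…,m}` extending the identity
on `ℤ`: each `φ q` maps scale-`k` chains to scale-`k` chains, is `G`-equivariant,
satisfies `ε ∘ φ₀ = ε` and commutes with the boundary maps. -/
def IsChainEndo (X : Finset G) (k m : ℕ)
    (φ : ∀ q : ℕ, ((Fin (q + 1) → G) →₀ ℤ) →ₗ[ℤ] ((Fin (q + 1) → G) →₀ ℤ)) : Prop :=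
  (∀ q ≤ m, ∀ c, VRChain X Set.univ q k c → VRChain X Set.univ q k (φ q c)) ∧
  (∀ q ≤ m, ∀ (g : G) (c), VRChain X Set.univ q k c →
    φ q (lTranslate g q c) = lTranslate g q (φ q c)) ∧
  (∀ c : (Fin 1 → G) →₀ ℤ, VRChain X Set.univ 0 k c → aug (φ 0 c) = aug c) ∧
  (∀ q : ℕ, q + 1 ≤ m → ∀ c : (Fin (q + 2) → G) →₀ ℤ, VRChain X Set.univ (q + 1) k c →
    bnd q (φ (q + 1) c) = φ q (bnd q c))

/-- The valuation of a simplex: `v(σ) = min_i χ(g_i)` (with values in `EReal`). -/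
noncomputable def vsimp (χ : G → ℝ) {q : ℕ} (σ : Fin (q + 1) → G) : EReal :=
  ⨅ i, (χ (σ i) : EReal)

/-- The valuation of a chain: the minimum of the valuations of the simplices in its support
(`⊤` for the zero chain). -/
noncomputable def vchain (χ : G → ℝ) {q : ℕ} (c : (Fin (q + 1) → G) →₀ ℤ) : EReal :=
  ⨅ σ ∈ c.support, vsimp χ σ

/-! ### Auxiliary material for `stmt5` -/

/-- Every element of `G` admits a word in `X ∪ X⁻¹`. -/
def GenAll (X : Finset G) : Prop :=
  ∀ g : G, ∃ u : List G, (∀ x ∈ u, x ∈ X ∨ x⁻¹ ∈ X) ∧ u.prod = g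

theorem genAll_of_closure {X : Finset G} (hX : Subgroup.closure (X : Set G) = ⊤) : GenAll X := by
  intro g
  have hg : g ∈ (Subgroup.closure (X : Set G)).toSubmonoid := by
    rw [hX]; trivial
  rw [Subgroup.closure_toSubmonoid] at hg
  obtain ⟨u, hu, hp⟩ := Submonoid.exists_list_of_mem_closure hg
  refine ⟨u, fun x hx => ?_, hp⟩
  rcases hu x hx with h | h
  · exact Or.inl (by simpa using h)
  · exact Or.inr (by simpa [Set.mem_inv] using h)

theorem wl_le {X : Finset G} {u : List G} {g : G} (hu : ∀ x ∈ u, x ∈ X ∨ x⁻¹ ∈ X)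
    (hp : u.prod = g) : wordLength X g ≤ u.length :=
  Nat.sInf_le ⟨u, rfl, hu, hp⟩

theorem exists_word {X : Finset G} (hG : GenAll X) (g : G) :
    ∃ u : List G, (∀ x ∈ u, x ∈ X ∨ x⁻¹ ∈ X) ∧ u.prod = g ∧ u.length = wordLength X g := by
  obtain ⟨u, hu, hp⟩ := hG g
  have hne : {n : ℕ | ∃ w : List G, w.length = n ∧ (∀ x ∈ w, x ∈ X ∨ x⁻¹ ∈ X) ∧ w.prod = g}.Nonempty :=
    ⟨u.length, u, rfl, hu, hp⟩
  obtain ⟨v, hlen, hv, hvp⟩ := Nat.sInf_mem hne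
  exact ⟨v, hv, hvp, hlen⟩

theorem inv_word_letters {X : Finset G} {u : List G} (hu : ∀ x ∈ u, x ∈ X ∨ x⁻¹ ∈ X) :
    ∀ x ∈ (u.map (·⁻¹)).reverse, x ∈ X ∨ x⁻¹ ∈ X := by
  intro x hx
  rw [List.mem_reverse, List.mem_map] at hx
  obtain ⟨a, ha, rfl⟩ := hx
  rcases hu a ha with h | h
  · exact Or.inr (by simpa using h)
  · exact Or.inl h

theorem inv_word_prod (u : List G) : ((u.map (·⁻¹)).reverse).prod = u.prod⁻¹ := by
  induction u with
  | nil => simp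
  | cons a u ih => simp [ih, List.prod_append, mul_inv_rev]

theorem wl_inv_le {X : Finset G} (hG : GenAll X) (g : G) :
    wordLength X g⁻¹ ≤ wordLength X g := by
  obtain ⟨u, hu, hp, hlen⟩ := exists_word hG g
  have := wl_le (inv_word_letters hu) (by rw [inv_word_prod, hp])
  simpa [hlen] using this

theorem wl_inv {X : Finset G} (hG : GenAll X) (g : G) :
    wordLength X g⁻¹ = wordLength X g :=
  le_antisymm (wl_inv_le hG g) (by simpa using wl_inv_le hG g⁻¹)

theorem wl_one {X : Finset G} : wordLength X (1 : G) = 0 :=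
  Nat.le_zero.mp (wl_le (u := []) (by simp) (by simp))

theorem wl_mul {X : Finset G} (hG : GenAll X) (g h : G) :
    wordLength X (g * h) ≤ wordLength X g + wordLength X h := by
  obtain ⟨u, hu, hup, hul⟩ := exists_word hG g
  obtain ⟨v, hv, hvp, hvl⟩ := exists_word hG h
  have := wl_le (X := X) (u := u ++ v) (fun x hx => by
    rcases List.mem_append.mp hx with h' | h'
    exacts [hu x h', hv x h']) (by rw [List.prod_append, hup, hvp])
  simpa [hul, hvl] using this

theorem wd_self {X : Finset G} (g : G) : wordDist X g g = 0 := by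
  simp [wordDist, wl_one]

theorem wd_symm {X : Finset G} (hG : GenAll X) (g h : G) :
    wordDist X g h = wordDist X h g := by
  unfold wordDist
  rw [show h⁻¹ * g = (g⁻¹ * h)⁻¹ by group]
  exact (wl_inv hG _).symm

theorem wd_mono {X : Finset G} [DecidableEq G] {y : G} (hG : GenAll X) (g h : G) :
    wordDist (insert y X) g h ≤ wordDist X g h := by
  obtain ⟨u, hu, hp, hlen⟩ := exists_word hG (g⁻¹ * h)
  unfold wordDist
  have := wl_le (X := insert y X) (u := u)
    (fun x hx => (hu x hx).imp (Finset.mem_insert_of_mem) (Finset.mem_insert_of_mem)) hp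
  simpa [hlen] using this

theorem wd_step {X : Finset G} (hG : GenAll X) (g₀ g a : G) (ha : a ∈ X ∨ a⁻¹ ∈ X) :
    wordDist X g₀ (g * a) ≤ wordDist X g₀ g + 1 := by
  unfold wordDist
  calc wordLength X (g₀⁻¹ * (g * a)) = wordLength X ((g₀⁻¹ * g) * a) := by rw [mul_assoc]
  _ ≤ wordLength X (g₀⁻¹ * g) + wordLength X a := wl_mul hG _ _
  _ ≤ wordLength X (g₀⁻¹ * g) + 1 := by
      have := wl_le (X := X) (u := [a]) (by simpa using ha) (List.prod_singleton)
      simp at this; omega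

theorem wd_letter {X : Finset G} {a : G} (g : G) (ha : a ∈ X ∨ a⁻¹ ∈ X) :
    wordDist X g (g * a) ≤ 1 := by
  unfold wordDist
  have := wl_le (X := X) (u := [a]) (by simpa using ha) (List.prod_singleton)
  simpa using this

theorem wd_decode {X : Finset G} (hG : GenAll X) {g h : G} (hd : wordDist X g h ≤ 1) :
    g⁻¹ * h = 1 ∨ (g⁻¹ * h ∈ X ∨ (g⁻¹ * h)⁻¹ ∈ X) := by
  obtain ⟨u, hu, hp, hlen⟩ := exists_word hG (g⁻¹ * h)
  unfold wordDist at hd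
  rw [← hlen] at hd
  match u, hd, hu, hp with
  | [], _, _, hp => exact Or.inl (by simpa using hp.symm)
  | [a], _, hu, hp =>
    have : g⁻¹ * h = a := by simpa using hp.symm
    rw [this]; exact Or.inr (hu a (by simp))
  | (a :: b :: t), hd, _, _ => simp at hd

theorem eta2 (σ : Fin 2 → G) : σ = ![σ 0, σ 1] := by
  funext i; fin_cases i <;> rfl

theorem comp2_0 (a b : G) : ![a, b] ∘ (0 : Fin 2).succAbove = ![b] := by
  funext i; fin_cases i <;> rfl
theorem comp2_1 (a b : G) : ![a, b] ∘ (1 : Fin 2).succAbove = ![a] := by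
  funext i; fin_cases i <;> rfl
theorem comp3_0 (a b c : G) : ![a, b, c] ∘ (0 : Fin 3).succAbove = ![b, c] := by
  funext i; fin_cases i <;> rfl
theorem comp3_1 (a b c : G) : ![a, b, c] ∘ (1 : Fin 3).succAbove = ![a, c] := by
  funext i; fin_cases i <;> rfl
theorem comp3_2 (a b c : G) : ![a, b, c] ∘ (2 : Fin 3).succAbove = ![a, b] := by
  funext i; fin_cases i <;> rfl

theorem bnd_single {q : ℕ} (σ : Fin (q + 2) → G) :
    bnd q (Finsupp.single σ 1) =
      ∑ i : Fin (q + 2), ((-1 : ℤ) ^ (i : ℕ)) • Finsupp.single (σ ∘ i.succAbove) (1 : ℤ) := by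
  simp [bnd, Finsupp.lift_apply, Finsupp.sum_single_index]

theorem bnd0_single (a b : G) :
    bnd 0 (Finsupp.single ![a, b] 1) =
      Finsupp.single ![b] 1 - Finsupp.single ![a] 1 := by
  rw [bnd_single, Fin.sum_univ_two, comp2_0, comp2_1]
  norm_num
  abel

theorem bnd1_single (a b c : G) :
    bnd 1 (Finsupp.single ![a, b, c] 1) =
      Finsupp.single ![b, c] 1 - Finsupp.single ![a, c] 1 + Finsupp.single ![a, b] 1 := by
  rw [bnd_single, Fin.sum_univ_three, comp3_0, comp3_1, comp3_2]
  norm_num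
  abel

/-- The path chain `g → g·a₁ → ⋯ → g·a₁⋯a_m` associated to a word. -/
noncomputable def pathC (g : G) : List G → ((Fin 2 → G) →₀ ℤ)
  | [] => 0
  | a :: u => Finsupp.single ![g, g * a] 1 + pathC (g * a) u

/-- The triangle fan filling `(g₀; path from g)`. -/
noncomputable def fanC (g₀ g : G) : List G → ((Fin 3 → G) →₀ ℤ)
  | [] => 0
  | a :: u => Finsupp.single ![g₀, g, g * a] 1 + fanC g₀ (g * a) u

theorem bnd0_path (g : G) (u : List G) :
    bnd 0 (pathC g u) = Finsupp.single ![g * u.prod] 1 - Finsupp.single ![g] 1 := by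
  induction u generalizing g with
  | nil => simp [pathC]
  | cons a u ih =>
    rw [pathC, map_add, bnd0_single, ih, List.prod_cons, ← mul_assoc]
    abel

theorem bnd1_fan (g₀ g : G) (u : List G) :
    bnd 1 (fanC g₀ g u) =
      pathC g u - Finsupp.single ![g₀, g * u.prod] 1 + Finsupp.single ![g₀, g] 1 := by
  induction u generalizing g with
  | nil => simp [fanC, pathC]
  | cons a u ih =>
    rw [fanC, map_add, bnd1_single, ih, pathC, List.prod_cons, ← mul_assoc]
    abel

theorem vr_path {X : Finset G} {u : List G} (hu : ∀ x ∈ u, x ∈ X ∨ x⁻¹ ∈ X)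
    (hG : GenAll X) (g : G) : VRChain X Set.univ 1 1 (pathC g u) := by
  classical
  induction u generalizing g with
  | nil => intro σ hσ; simp [pathC] at hσ
  | cons a u ih =>
    intro σ hσ
    have ha : a ∈ X ∨ a⁻¹ ∈ X := hu a (by simp)
    rcases Finset.mem_union.mp (Finsupp.support_add hσ) with h1 | h2
    · have hσ' : σ = ![g, g * a] := Finset.mem_singleton.mp (Finsupp.support_single_subset h1)
      subst hσ'
      have d01 : wordDist X g (g * a) ≤ 1 := wd_letter g ha
      have d10 : wordDist X (g * a) g ≤ 1 := by rw [wd_symm hG (g * a) g]; exact d01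
      refine ⟨fun _ => trivial, fun i j => ?_⟩
      fin_cases i <;> fin_cases j <;>
        first
          | exact le_trans (le_of_eq (wd_self _)) (Nat.zero_le _)
          | exact d01
          | exact d10
    · exact ih (fun x hx => hu x (by simp [hx])) (g * a) σ h2

theorem vr_fan {X : Finset G} (hG : GenAll X) :
    ∀ (u : List G), (∀ x ∈ u, x ∈ X ∨ x⁻¹ ∈ X) → ∀ (g₀ g : G) (N K : ℕ),
      wordDist X g₀ g ≤ N → u.length + N ≤ K →
      VRChain X Set.univ 2 K (fanC g₀ g u) := by
  classical
  intro u
  induction u with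
  | nil => intro _ g₀ g N K _ _ σ hσ; simp [fanC] at hσ
  | cons a u ih =>
    intro hu g₀ g N K h1 h2 σ hσ
    have ha : a ∈ X ∨ a⁻¹ ∈ X := hu a (by simp)
    have hK1 : 1 ≤ K := by simp at h2; omega
    have hNK : N ≤ K := by simp at h2; omega
    have hN1K : N + 1 ≤ K := by simp at h2; omega
    rcases Finset.mem_union.mp (Finsupp.support_add hσ) with hs | hs
    · have hσ' : σ = ![g₀, g, g * a] := Finset.mem_singleton.mp (Finsupp.support_single_subset hs)
      subst hσ'
      have d01 : wordDist X g₀ g ≤ K := h1.trans hNK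
      have d02 : wordDist X g₀ (g * a) ≤ K := (wd_step hG g₀ g a ha).trans (by omega)
      have d12 : wordDist X g (g * a) ≤ K := (wd_letter g ha).trans hK1
      have d10 : wordDist X g g₀ ≤ K := by rw [wd_symm hG g g₀]; exact d01
      have d20 : wordDist X (g * a) g₀ ≤ K := by rw [wd_symm hG (g * a) g₀]; exact d02
      have d21 : wordDist X (g * a) g ≤ K := by rw [wd_symm hG (g * a) g]; exact d12
      refine ⟨fun _ => trivial, fun i j => ?_⟩
      fin_cases i <;> fin_cases j <;>
        first
          | exact le_trans (le_of_eq (wd_self _)) (Nat.zero_le _)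
          | exact d01
          | exact d02
          | exact d12
          | exact d10
          | exact d20
          | exact d21
    · exact ih (fun x hx => hu x (by simp [hx])) g₀ (g * a) (N + 1) K
        ((wd_step hG g₀ g a ha).trans (by omega)) (by simp at h2 ⊢; omega) σ hs

open scoped Classical in
/-- The chosen word joining `g` to `h₁`. -/
noncomputable def uof (y : G) (w : List G) (g h₁ : G) : List G :=
  if g⁻¹ * h₁ = y then w else (w.map (·⁻¹)).reverse

open scoped Classical in
/-- The replacement of an edge: kept if it is an `X`-edge at scale 1, otherwise replaced by
the path of the word for `y^{±1}`. -/
noncomputable def Pmap (X : Finset G) (y : G) (w : List G) (σ : Fin 2 → G) :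
    (Fin 2 → G) →₀ ℤ :=
  if wordDist X (σ 0) (σ 1) ≤ 1 ∧ wordDist X (σ 1) (σ 0) ≤ 1 then Finsupp.single σ 1
  else pathC (σ 0) (uof y w (σ 0) (σ 1))

open scoped Classical in
/-- The filling 2-chain realizing `single σ - Pmap σ` as a boundary. -/
noncomputable def Fmap (X : Finset G) (y : G) (w : List G) (σ : Fin 2 → G) :
    (Fin 3 → G) →₀ ℤ :=
  if wordDist X (σ 0) (σ 1) ≤ 1 ∧ wordDist X (σ 1) (σ 0) ≤ 1 then 0
  else Finsupp.single ![σ 0, σ 0, σ 0] 1 -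
    fanC (σ 0) (σ 0) (uof y w (σ 0) (σ 1))

/-- Adding a redundant generator `y = y₁⋯y_n`: if `1`-cycles at scale `1` w.r.t. `d_X` bound
at scale `l`, then `1`-cycles at scale `1` w.r.t. `d_Y` (`Y = X ∪ {y}`) bound at scale
`l + 2n`. -/
theorem stmt5 {G : Type*} [Group G] [DecidableEq G] (X : Finset G)
    (hX : Subgroup.closure (X : Set G) = ⊤)
    (y : G) (n : ℕ) (w : List G) (hlen : w.length = n)
    (hw : ∀ x ∈ w, x ∈ X ∨ x⁻¹ ∈ X) (hprod : w.prod = y)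
    (l : ℕ) (h : BoundsAt X Set.univ 1 1 l) :
    BoundsAt (insert y X) Set.univ 1 1 (l + 2 * n) := by
  classical
  have hGX : GenAll X := genAll_of_closure hX
  have hGY : GenAll (insert y X) := fun g => (hGX g).imp fun u ⟨h1, h2⟩ =>
    ⟨fun x hx => (h1 x hx).imp Finset.mem_insert_of_mem Finset.mem_insert_of_mem, h2⟩
  set Y := insert y X with hY
  intro z hz hcyc
  -- key facts about edges in the support
  have key : ∀ g h₁ : G, wordDist Y g h₁ ≤ 1 →
      ¬(wordDist X g h₁ ≤ 1 ∧ wordDist X h₁ g ≤ 1) →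
      1 ≤ n ∧
      (∀ x ∈ uof y w g h₁, x ∈ X ∨ x⁻¹ ∈ X) ∧
      (uof y w g h₁).prod = g⁻¹ * h₁ ∧
      (uof y w g h₁).length = n := by
    intro g h₁ hed hcond
    unfold uof
    have hXcase : ¬(g⁻¹ * h₁ ∈ X ∨ (g⁻¹ * h₁)⁻¹ ∈ X) := by
      intro ha
      apply hcond
      constructor
      · have := wd_letter (X := X) g ha
        rwa [show g * (g⁻¹ * h₁) = h₁ by group] at this
      · have ha' : (g⁻¹ * h₁)⁻¹ ∈ X ∨ ((g⁻¹ * h₁)⁻¹)⁻¹ ∈ X := by simpa using ha.symm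
        have := wd_letter (X := X) h₁ ha'
        rwa [show h₁ * (g⁻¹ * h₁)⁻¹ = g by group] at this
    have hne1 : g⁻¹ * h₁ ≠ 1 := by
      intro h1
      have hgh : g = h₁ := inv_mul_eq_one.mp h1
      exact hcond ⟨by rw [hgh]; simp [wd_self], by rw [hgh]; simp [wd_self]⟩
    have hey : g⁻¹ * h₁ = y ∨ (g⁻¹ * h₁)⁻¹ = y := by
      rcases wd_decode hGY hed with h1 | h1 | h1
      · exact absurd h1 hne1
      · rcases Finset.mem_insert.mp h1 with h2 | h2
        · exact Or.inl h2
        · exact absurd (Or.inl h2) hXcase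
      · rcases Finset.mem_insert.mp h1 with h2 | h2
        · exact Or.inr h2
        · exact absurd (Or.inr h2) hXcase
    have hn1 : 1 ≤ n := by
      rcases Nat.eq_zero_or_pos n with h0 | h0
      · exfalso
        have hw0 : w = [] := List.length_eq_zero_iff.mp (by omega)
        have hy1 : y = 1 := by rw [← hprod, hw0, List.prod_nil]
        rcases hey with h1 | h1
        · exact hne1 (h1.trans hy1)
        · exact hne1 (by rw [← inv_inv (g⁻¹ * h₁), h1, hy1, inv_one])
      · exact h0
    by_cases hcy : g⁻¹ * h₁ = y
    · simp only [hcy, if_pos]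
      exact ⟨hn1, hw, hprod, hlen⟩
    · simp only [if_neg hcy]
      have hcy' := hey.resolve_left hcy
      exact ⟨hn1, inv_word_letters hw,
        by rw [inv_word_prod, hprod, ← hcy', inv_inv],
        by simp [hlen]⟩
  -- edges in support satisfy hedge
  have hedge : ∀ σ ∈ z.support, wordDist Y (σ 0) (σ 1) ≤ 1 := fun σ hσ => (hz σ hσ).2 0 1
  -- boundary of Pmap
  have hbndP : ∀ σ ∈ z.support,
      bnd 0 (Pmap X y w σ) = Finsupp.single ![σ 1] 1 - Finsupp.single ![σ 0] 1 := by
    intro σ hσ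
    unfold Pmap
    split_ifs with hc
    · have hσeq : Finsupp.single σ (1 : ℤ) = Finsupp.single ![σ 0, σ 1] 1 := by
        rw [← eta2 σ]
      rw [hσeq, bnd0_single]
    · obtain ⟨hn1, hu, hup, hul⟩ := key (σ 0) (σ 1) (hedge σ hσ) hc
      rw [bnd0_path, hup, mul_inv_cancel_left]
  -- boundary of Fmap
  have hbndF : ∀ σ ∈ z.support,
      bnd 1 (Fmap X y w σ) = Finsupp.single σ 1 - Pmap X y w σ := by
    intro σ hσ
    unfold Fmap Pmap
    split_ifs with hc
    · simp
    · obtain ⟨hn1, hu, hup, hul⟩ := key (σ 0) (σ 1) (hedge σ hσ) hc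
      have hσeq : Finsupp.single σ (1 : ℤ) = Finsupp.single ![σ 0, σ 1] 1 := by
        rw [← eta2 σ]
      rw [map_sub, bnd1_single, bnd1_fan, hup, mul_inv_cancel_left, hσeq]
      abel
  -- chain properties
  have hvrP : ∀ σ ∈ z.support, VRChain X Set.univ 1 1 (Pmap X y w σ) := by
    intro σ hσ
    unfold Pmap
    split_ifs with hc
    · intro τ hτ
      have hτ' : τ = σ := Finset.mem_singleton.mp (Finsupp.support_single_subset hτ)
      subst hτ'
      refine ⟨fun _ => trivial, fun i j => ?_⟩
      fin_cases i <;> fin_cases j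
      · exact le_trans (le_of_eq (wd_self _)) (Nat.zero_le _)
      · exact hc.1
      · exact hc.2
      · exact le_trans (le_of_eq (wd_self _)) (Nat.zero_le _)
    · obtain ⟨_, hu, _, _⟩ := key (σ 0) (σ 1) (hedge σ hσ) hc
      exact vr_path hu hGX (σ 0)
  have hvrF : ∀ σ ∈ z.support, VRChain Y Set.univ 2 (l + 2 * n) (Fmap X y w σ) := by
    intro σ hσ
    unfold Fmap
    split_ifs with hc
    · intro τ hτ; simp at hτ
    · obtain ⟨hn1, hu, hup, hul⟩ := key (σ 0) (σ 1) (hedge σ hσ) hc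
      intro τ hτ
      rcases Finset.mem_union.mp (Finsupp.support_sub hτ) with hs | hs
      · have hτ' : τ = ![σ 0, σ 0, σ 0] :=
          Finset.mem_singleton.mp (Finsupp.support_single_subset hs)
        subst hτ'
        refine ⟨fun _ => trivial, fun i j => ?_⟩
        fin_cases i <;> fin_cases j <;> exact le_trans (le_of_eq (wd_self _)) (Nat.zero_le _)
      · refine vr_fan hGY _ (fun x hx => (hu x hx).imp Finset.mem_insert_of_mem
          Finset.mem_insert_of_mem) (σ 0) (σ 0) 0 (l + 2 * n) (by simp [wd_self]) ?_ τ hs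
        omega
  -- the modified cycle
  set z' : (Fin 2 → G) →₀ ℤ := z.sum (fun σ m => m • Pmap X y w σ) with hz'
  have hz'vr : VRChain X Set.univ 1 1 z' := by
    intro τ hτ
    obtain ⟨σ, hσ, hτ'⟩ := Finset.mem_biUnion.mp (Finsupp.support_sum hτ)
    exact hvrP σ hσ τ (Finsupp.support_smul hτ')
  have hz'cyc : bnd 0 z' = 0 := by
    have e1 : bnd 0 z' = z.sum fun σ m => m • bnd 0 (Pmap X y w σ) := by
      rw [hz', map_finsuppSum]
      exact Finsupp.sum_congr fun σ _ => (bnd 0).map_smul _ _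
    have e2 : bnd 0 z = z.sum fun σ m => m • bnd 0 (Finsupp.single σ 1) := by
      conv_lhs => rw [← Finsupp.sum_single z]
      rw [map_finsuppSum]
      refine Finsupp.sum_congr fun σ _ => ?_
      rw [← (bnd 0).map_smul, Finsupp.smul_single', mul_one]
    rw [e1, ← hcyc, e2]
    refine Finsupp.sum_congr fun σ hσ => ?_
    rw [hbndP σ hσ]
    have hσeq : Finsupp.single σ (1 : ℤ) = Finsupp.single ![σ 0, σ 1] 1 := by
      rw [← eta2 σ]
    rw [hσeq, bnd0_single]
  obtain ⟨c, hcvr, hcb⟩ := h z' hz'vr hz'cyc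
  refine ⟨c + z.sum (fun σ m => m • Fmap X y w σ), ?_, ?_⟩
  · intro τ hτ
    rcases Finset.mem_union.mp (Finsupp.support_add hτ) with h1 | h1
    · refine ⟨fun _ => trivial, fun i j => ?_⟩
      calc wordDist Y (τ i) (τ j) ≤ wordDist X (τ i) (τ j) := wd_mono hGX _ _
      _ ≤ l := (hcvr τ h1).2 i j
      _ ≤ l + 2 * n := by omega
    · obtain ⟨σ, hσ, hτ'⟩ := Finset.mem_biUnion.mp (Finsupp.support_sum h1)
      exact hvrF σ hσ τ (Finsupp.support_smul hτ')
  · rw [map_add, hcb, map_finsuppSum]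
    have e3 : (z.sum fun σ m => bnd 1 (m • Fmap X y w σ)) =
        z.sum fun σ m => m • Finsupp.single σ 1 - m • Pmap X y w σ := by
      refine Finsupp.sum_congr fun σ hσ => ?_
      rw [(bnd 1).map_smul, hbndF σ hσ, smul_sub]
    rw [e3]
    have e4 : (z.sum fun σ m => m • Finsupp.single σ (1 : ℤ) - m • Pmap X y w σ) =
        (z.sum fun σ m => m • Finsupp.single σ (1 : ℤ)) - z' := by
      rw [hz', Finsupp.sum, Finsupp.sum, Finsupp.sum, Finset.sum_sub_distrib]
    have e5 : (z.sum fun σ m => m • Finsupp.single σ (1 : ℤ)) = z := by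
      rw [show (fun (σ : Fin 2 → G) (m : ℤ) => m • Finsupp.single σ (1 : ℤ)) =
        fun σ m => Finsupp.single σ m from funext fun σ => funext fun m => by
          rw [Finsupp.smul_single', mul_one], Finsupp.sum_single]
    rw [e4, e5]
    abel
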